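/- arXiv:2511.01426 — 2 statements merged into one kernel-verified Lean document; each statement's English description precedes it below -/
import Mathlib

section
/- Let X be a Priestley space, 𝒮 a family of clopen upsets of X, and W a clopen upset of X that is the least upper bound of 𝒮 in the poset of clopen upsets of X ordered by inclusion. Then the following are equivalent: (a) W equals the topological closure of ⋃𝒮; (b) the join of 𝒮 is exact, i.e., for every clopen upset A of X, the set A ∩ W is the least upper bound, in the poset of clopen upsets of X, of the family {A ∩ V | V ∈ 𝒮}. -/
/-!
If `W = closure (⋃ 𝒮)`, exactness is immediate: for open `A`,
`A ∩ closure (⋃ 𝒮) ⊆ closure (A ∩ ⋃ 𝒮)`, and any closed upper bound of the sets `A ∩ V`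
contains the latter. Conversely, let `x ∈ W` lie outside the compact set `F = closure (⋃ 𝒮)`.
The sets `A \ B`, with `A, B` clopen upsets and `x ∈ A \ B`, form a downward directed family of
closed sets whose intersection is `{x}` by Priestley separation, so one of them misses `F`.
Then `B` bounds every `A ∩ V` (`V ∈ 𝒮`) but not `A ∩ W ∋ x`, so the join is not exact at `A`.
-/

/-- `W` is the least upper bound of the family `𝒮` in the poset of clopen
upsets of `X`, ordered by inclusion. -/
def IsClopenUpsetLUB {X : Type*} [TopologicalSpace X] [Preorder X]
    (𝒮 : Set (Set X)) (W : Set X) : Prop :=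
  IsClopen W ∧ IsUpperSet W ∧ (∀ V ∈ 𝒮, V ⊆ W) ∧
    ∀ W' : Set X, IsClopen W' → IsUpperSet W' → (∀ V ∈ 𝒮, V ⊆ W') → W ⊆ W'

open Set

section

variable {X : Type*} [TopologicalSpace X]

theorem IsCompact.exists_isClopen_upper_inter_subset_of_notMem [PartialOrder X]
    [PriestleySpace X] {F : Set X} (hF : IsCompact F) {x : X} (hx : x ∉ F) :
    ∃ A B : Set X, IsClopen A ∧ IsUpperSet A ∧ IsClopen B ∧ IsUpperSet B ∧
      x ∈ A ∧ x ∉ B ∧ A ∩ F ⊆ B := by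
  let ι := {p : Set X × Set X // IsClopen p.1 ∧ IsUpperSet p.1 ∧ IsClopen p.2 ∧
    IsUpperSet p.2 ∧ x ∈ p.1 ∧ x ∉ p.2}
  have : Nonempty ι :=
    ⟨⟨(univ, ∅), isClopen_univ, isUpperSet_univ, isClopen_empty, isUpperSet_empty, trivial, id⟩⟩
  let t : ι → Set X := fun p => p.1.1 ∩ p.1.2ᶜ
  have ht_closed : ∀ p, IsClosed (t p) := fun ⟨_, hA, _, hB, _⟩ =>
    hA.isClosed.inter hB.isOpen.isClosed_compl
  -- Priestley separation: `x` is the only point lying in every `t p`.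
  have ht_inter : F ∩ ⋂ p, t p = ∅ := by
    refine eq_empty_of_forall_notMem fun y ⟨hyF, hy⟩ => ?_
    have hyx : y ≠ x := fun h => hx (h ▸ hyF)
    rcases hyx.not_le_or_not_ge with hyx | hxy
    · obtain ⟨U, hUc, hUu, hyU, hxU⟩ := exists_isClopen_upper_of_not_le hyx
      exact (mem_iInter.mp hy ⟨(univ, U), isClopen_univ, isUpperSet_univ, hUc, hUu,
        trivial, hxU⟩).2 hyU
    · obtain ⟨U, hUc, hUu, hxU, hyU⟩ := exists_isClopen_upper_of_not_le hxy
      exact hyU (mem_iInter.mp hy ⟨(U, ∅), hUc, hUu, isClopen_empty, isUpperSet_empty,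
        hxU, id⟩).1
  have ht_directed : Directed (· ⊇ ·) t := by
    rintro ⟨⟨A₁, B₁⟩, hA₁, hA₁u, hB₁, hB₁u, hxA₁, hxB₁⟩
      ⟨⟨A₂, B₂⟩, hA₂, hA₂u, hB₂, hB₂u, hxA₂, hxB₂⟩
    refine ⟨⟨(A₁ ∩ A₂, B₁ ∪ B₂), hA₁.inter hA₂, hA₁u.inter hA₂u, hB₁.union hB₂,
      hB₁u.union hB₂u, ⟨hxA₁, hxA₂⟩, fun h => h.elim hxB₁ hxB₂⟩, ?_, ?_⟩ <;>
    · intro z hz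
      simp only [t, mem_inter_iff, mem_compl_iff, mem_union, not_or] at hz ⊢
      tauto
  obtain ⟨⟨⟨A, B⟩, hA, hAu, hB, hBu, hxA, hxB⟩, hp⟩ :=
    hF.elim_directed_family_closed t ht_closed ht_inter ht_directed
  refine ⟨A, B, hA, hAu, hB, hBu, hxA, hxB, fun z ⟨hzA, hzF⟩ => ?_⟩
  by_contra hzB
  exact (eq_empty_iff_forall_notMem.mp hp) z ⟨hzF, hzA, hzB⟩

theorem IsClopenUpsetLUB.closure_sUnion_subset [Preorder X] {𝒮 : Set (Set X)} {W : Set X}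
    (hW : IsClopenUpsetLUB 𝒮 W) : closure (⋃₀ 𝒮) ⊆ W :=
  closure_minimal (sUnion_subset hW.2.2.1) hW.1.isClosed

theorem IsClopenUpsetLUB.inter_of_eq_closure [Preorder X] {𝒮 : Set (Set X)} {W : Set X}
    (hW : IsClopenUpsetLUB 𝒮 W) (hW_eq : W = closure (⋃₀ 𝒮)) {A : Set X} (hA : IsClopen A)
    (hAu : IsUpperSet A) : IsClopenUpsetLUB ((fun V => A ∩ V) '' 𝒮) (A ∩ W) := by
  refine ⟨hA.inter hW.1, hAu.inter hW.2.1, ?_, fun W' hW' _ hbound => ?_⟩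
  · rintro _ ⟨V, hV, rfl⟩
    exact inter_subset_inter_right A (hW.2.2.1 V hV)
  · have : A ∩ ⋃₀ 𝒮 ⊆ W' := by
      rintro z ⟨hzA, V, hV, hzV⟩
      exact hbound _ ⟨V, hV, rfl⟩ ⟨hzA, hzV⟩
    rw [hW_eq]
    exact hA.isOpen.inter_closure.trans (closure_minimal this hW'.isClosed)

end

theorem exact_join_iff_closure_general {X : Type*} [TopologicalSpace X] [PartialOrder X]
    [CompactSpace X] [PriestleySpace X]
    (𝒮 : Set (Set X))
    (W : Set X) (hW : IsClopenUpsetLUB 𝒮 W) :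
    W = closure (⋃₀ 𝒮) ↔
      ∀ A : Set X, IsClopen A → IsUpperSet A →
        IsClopenUpsetLUB ((fun V => A ∩ V) '' 𝒮) (A ∩ W) := by
  refine ⟨fun hW_eq A hA hAu => hW.inter_of_eq_closure hW_eq hA hAu, fun hexact => ?_⟩
  refine subset_antisymm (fun x hxW => ?_) hW.closure_sUnion_subset
  by_contra hx
  obtain ⟨A, B, hA, hAu, hB, hBu, hxA, hxB, hAB⟩ :=
    isClosed_closure.isCompact.exists_isClopen_upper_inter_subset_of_notMem hx
  have hbound : ∀ V ∈ (fun V => A ∩ V) '' 𝒮, V ⊆ B := by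
    rintro _ ⟨V, hV, rfl⟩
    exact fun z hz => hAB ⟨hz.1, subset_closure ⟨V, hV, hz.2⟩⟩
  exact hxB ((hexact A hA hAu).2.2.2 B hB hBu hbound ⟨hxA, hxW⟩)

/-- Let `X` be a Priestley space, `𝒮` a family of clopen upsets of `X`, and `W`
a clopen upset that is the least upper bound of `𝒮` in the poset of clopen
upsets of `X`.  Then `W = closure (⋃ 𝒮)` iff the join of `𝒮` is exact, i.e.
for every clopen upset `A`, the set `A ∩ W` is the least upper bound, in the
poset of clopen upsets, of the family `{A ∩ V | V ∈ 𝒮}`. -/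
theorem exact_join_iff_closure {X : Type*} [TopologicalSpace X] [PartialOrder X]
    [CompactSpace X] [PriestleySpace X]
    (𝒮 : Set (Set X)) (h𝒮 : ∀ V ∈ 𝒮, IsClopen V ∧ IsUpperSet V)
    (W : Set X) (hW : IsClopenUpsetLUB 𝒮 W) :
    W = closure (⋃₀ 𝒮) ↔
      ∀ A : Set X, IsClopen A → IsUpperSet A →
        IsClopenUpsetLUB ((fun V => A ∩ V) '' 𝒮) (A ∩ W) :=
  exact_join_iff_closure_general 𝒮 W hW
end

section
/- Let X be a Priestley space and 𝒮 a family of clopen upsets of X. Then 𝒮 has a least upper bound in the poset of clopen upsets of X (ordered by inclusion) if and only if the upper closure ↑cl(⋃𝒮) of the closure of ⋃𝒮 is open; in that case ↑cl(⋃𝒮) is this least upper bound. -/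
/-! By Priestley separation and compactness, a point outside the upper closure of a compact
set `K` is separated from `K` by a clopen upset. Hence `↑cl(⋃𝒮)` is a closed upset: it is the
least closed upset containing every member of `𝒮`, and also the intersection of the clopen upsets
containing them, so a least clopen upper bound can only be `↑cl(⋃𝒮)` itself. -/

open Set

theorem upperClosure_closure_sUnion_subset_iff {X : Type*} [TopologicalSpace X] [Preorder X]
    {𝒮 : Set (Set X)} {W : Set X} (hWc : IsClosed W) (hWu : IsUpperSet W) :
    (upperClosure (closure (⋃₀ 𝒮)) : Set X) ⊆ W ↔ ∀ V ∈ 𝒮, V ⊆ W := by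
  refine ⟨fun h V hV => ?_,
    fun h => upperClosure_min (closure_minimal (sUnion_subset h) hWc) hWu⟩
  exact (subset_sUnion_of_mem hV).trans (subset_closure.trans (subset_upperClosure.trans h))

section Priestley

variable {X : Type*} [TopologicalSpace X] [Preorder X] [PriestleySpace X]

theorem IsCompact.exists_isClopen_isUpperSet_of_notMem_upperClosure {K : Set X}
    (hK : IsCompact K) {x : X} (hx : x ∉ upperClosure K) :
    ∃ W : Set X, IsClopen W ∧ IsUpperSet W ∧ K ⊆ W ∧ x ∉ W := by
  have hnle : ∀ s ∈ K, ¬s ≤ x := fun s hs hsx => hx (mem_upperClosure.2 ⟨s, hs, hsx⟩)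
  choose! U hUc hUu hsU hxU using fun s hs => exists_isClopen_upper_of_not_le (hnle s hs)
  obtain ⟨t, htK, htfin, hKt⟩ :=
    hK.elim_finite_subcover_image (fun s hs => (hUc s hs).isOpen)
      fun s hs => mem_biUnion hs (hsU s hs)
  refine ⟨⋃ s ∈ t, U s, htfin.isClopen_biUnion fun s hs => hUc s (htK hs),
    isUpperSet_iUnion₂ fun s hs => hUu s (htK hs), hKt, ?_⟩
  simp only [mem_iUnion, not_exists]
  exact fun s hs => hxU s (htK hs)

theorem IsCompact.isClosed_upperClosure {K : Set X} (hK : IsCompact K) :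
    IsClosed (upperClosure K : Set X) := by
  refine isOpen_compl_iff.1 <| isOpen_iff_forall_mem_open.2 fun x hx => ?_
  obtain ⟨W, hWc, hWu, hKW, hxW⟩ := hK.exists_isClopen_isUpperSet_of_notMem_upperClosure hx
  exact ⟨Wᶜ, compl_subset_compl.2 (upperClosure_min hKW hWu), hWc.compl.isOpen, hxW⟩

variable [CompactSpace X]

theorem isClopenUpsetLUB_upperClosure_closure {𝒮 : Set (Set X)}
    (hopen : IsOpen (upperClosure (closure (⋃₀ 𝒮)) : Set X)) :
    IsClopenUpsetLUB 𝒮 (upperClosure (closure (⋃₀ 𝒮))) := by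
  have hclosed := (isClosed_closure (s := ⋃₀ 𝒮)).isCompact.isClosed_upperClosure
  refine ⟨⟨hclosed, hopen⟩, (upperClosure _).upper,
    (upperClosure_closure_sUnion_subset_iff hclosed (upperClosure _).upper).1 subset_rfl, ?_⟩
  exact fun W' hW'c hW'u => (upperClosure_closure_sUnion_subset_iff hW'c.isClosed hW'u).2

theorem IsClopenUpsetLUB.eq_upperClosure_closure {𝒮 : Set (Set X)} {W : Set X}
    (h : IsClopenUpsetLUB 𝒮 W) : W = upperClosure (closure (⋃₀ 𝒮)) := by
  obtain ⟨hWc, hWu, hW𝒮, hWleast⟩ := h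
  refine Subset.antisymm (fun x hxW => ?_)
    ((upperClosure_closure_sUnion_subset_iff hWc.isClosed hWu).2 hW𝒮)
  by_contra hx
  obtain ⟨W', hW'c, hW'u, hKW', hxW'⟩ :=
    isClosed_closure.isCompact.exists_isClopen_isUpperSet_of_notMem_upperClosure hx
  exact hxW' <| hWleast W' hW'c hW'u
    (fun V hV => (subset_sUnion_of_mem hV).trans (subset_closure.trans hKW')) hxW

end Priestley

theorem hasLUB_iff_upperClosure_closure_isOpen_general {X : Type*} [TopologicalSpace X]
    [PartialOrder X] [CompactSpace X] [PriestleySpace X]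
    (𝒮 : Set (Set X)) :
    ((∃ W : Set X, IsClopenUpsetLUB 𝒮 W) ↔
        IsOpen {x : X | ∃ s ∈ closure (⋃₀ 𝒮), s ≤ x}) ∧
      (IsOpen {x : X | ∃ s ∈ closure (⋃₀ 𝒮), s ≤ x} →
        IsClopenUpsetLUB 𝒮 {x : X | ∃ s ∈ closure (⋃₀ 𝒮), s ≤ x}) := by
  refine ⟨⟨fun ⟨W, hW⟩ => ?_, fun hopen => ⟨_, isClopenUpsetLUB_upperClosure_closure hopen⟩⟩,
    isClopenUpsetLUB_upperClosure_closure⟩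
  change IsOpen (upperClosure (closure (⋃₀ 𝒮)) : Set X)
  exact hW.eq_upperClosure_closure ▸ hW.1.isOpen

/-- Let `X` be a Priestley space and `𝒮` a family of clopen upsets of `X`.
Then `𝒮` has a least upper bound in the poset of clopen upsets of `X` iff the
upper closure `↑cl(⋃𝒮)` of the closure of `⋃𝒮` is open; in that case
`↑cl(⋃𝒮)` is this least upper bound. -/
theorem hasLUB_iff_upperClosure_closure_isOpen {X : Type*} [TopologicalSpace X]
    [PartialOrder X] [CompactSpace X] [PriestleySpace X]
    (𝒮 : Set (Set X)) (h𝒮 : ∀ V ∈ 𝒮, IsClopen V ∧ IsUpperSet V) :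
    ((∃ W : Set X, IsClopenUpsetLUB 𝒮 W) ↔
        IsOpen {x : X | ∃ s ∈ closure (⋃₀ 𝒮), s ≤ x}) ∧
      (IsOpen {x : X | ∃ s ∈ closure (⋃₀ 𝒮), s ≤ x} →
        IsClopenUpsetLUB 𝒮 {x : X | ∃ s ∈ closure (⋃₀ 𝒮), s ≤ x}) :=
  hasLUB_iff_upperClosure_closure_isOpen_general 𝒮
end
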